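/- arXiv:2509.19966 — 2 statements merged into one kernel-verified Lean document; each statement's English description precedes it below -/
import Mathlib

section
/- Let G be a finite simple graph and l ∈ ℕ. The map sending an edge subset β ∈ F_2^E to its degree-parity vector Bᵀβ ∈ F_2^V is injective on the set of edge subsets of cardinality at most l if and only if G has no cycle of length at most 2l (equivalently, the girth of G is at least 2l+1). -/
/-
Identify `β ∈ F_2^E` with its support, an edge set. Then `(Bᵀ β) v` is the parity of the number
of edges of that set at `v`, so the nonzero kernel vectors of `Bᵀ` are exactly the nonempty edge
sets in which every vertex has even degree. Since `β ↦ Bᵀ β` is additive, it is injective on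
vectors of weight `≤ l` iff its kernel contains no nonzero vector of weight `≤ 2 l` (split such a
vector into two pieces of weight `≤ l`). The edge set of a cycle is such a kernel vector, and
conversely a nonempty edge set with all degrees even has no leaf, so it is not a forest and
contains a cycle, which is no longer than the number of edges of the set.
-/

open Matrix

/-- Edge-vertex incidence matrix of `G` over `F_2`: `B e v = 1` iff `v` is an endpoint of `e`. -/
def SimpleGraph.inc {V : Type*} [Fintype V] [DecidableEq V] (G : SimpleGraph V)
    [DecidableRel G.Adj] : Matrix G.edgeSet V (ZMod 2) :=
  fun e v => if v ∈ (e : Sym2 V) then 1 else 0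

/-- Hamming weight of an edge-subset `β ∈ F_2^E`. -/
def hamWt {V : Type*} [Fintype V] [DecidableEq V] {G : SimpleGraph V}
    [DecidableRel G.Adj] (β : G.edgeSet → ZMod 2) : ℕ :=
  (Finset.univ.filter (fun e => β e ≠ 0)).card

open Finset

section Hamming

variable {ι : Type*} [Fintype ι] {β : ι → Type*} [∀ i, DecidableEq (β i)]

theorem exists_hammingNorm_le_hammingDist_le [∀ i, Zero (β i)] (x : ∀ i, β i) {a b : ℕ}
    (h : hammingNorm x ≤ a + b) : ∃ y, hammingNorm y ≤ a ∧ hammingDist y x ≤ b := by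
  set s : Finset ι := {i | x i ≠ 0}
  have hs : #s ≤ a + b := h
  classical
  obtain ⟨A, hAs, hA⟩ := exists_subset_card_eq (min_le_right a #s)
  refine ⟨fun i ↦ if i ∈ A then x i else 0, ?_, ?_⟩
  · have : ({i | (if i ∈ A then x i else 0) ≠ 0} : Finset ι) = A := by
      ext i
      have := @hAs i
      by_cases hi : i ∈ A <;> simp_all [s]
    rw [hammingNorm, this, hA]
    exact min_le_left _ _
  · have : ({i | (if i ∈ A then x i else 0) ≠ x i} : Finset ι) = s \ A := by
      ext i
      by_cases hi : i ∈ A <;> simp [s, hi, eq_comm]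
    rw [hammingDist, this, card_sdiff_of_subset hAs, hA]
    omega

theorem AddMonoidHom.injOn_hammingNorm_le_iff [∀ i, AddGroup (β i)] {M : Type*} [AddGroup M]
    (f : (∀ i, β i) →+ M) (l : ℕ) :
    Set.InjOn f {x | hammingNorm x ≤ l} ↔ ¬∃ x, x ≠ 0 ∧ f x = 0 ∧ hammingNorm x ≤ 2 * l := by
  constructor
  · rintro hinj ⟨x, hx0, hfx, hx⟩
    obtain ⟨y, hy, hyx⟩ := exists_hammingNorm_le_hammingDist_le x (a := l) (b := l) (by omega)
    have hyx' : y = -x + y := hinj hy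
      (by rwa [Set.mem_ofPred, ← hammingDist_eq_hammingNorm, hammingDist_comm])
      (by rw [map_add, map_neg, hfx, neg_zero, zero_add])
    exact hx0 (neg_eq_zero.mp (add_eq_right.mp hyx'.symm))
  · rintro hker x hx y hy hxy
    by_contra hne
    refine hker ⟨-x + y, fun h ↦ hne (neg_add_eq_zero.mp h), ?_, ?_⟩
    · rw [map_add, map_neg, hxy, neg_add_cancel]
    calc hammingNorm (-x + y) = hammingDist x y := (hammingDist_eq_hammingNorm x y).symm
      _ ≤ hammingDist x 0 + hammingDist 0 y := hammingDist_triangle x 0 y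
      _ ≤ 2 * l := by
        rw [hammingDist_zero_right, hammingDist_zero_left]
        exact (add_le_add hx hy).trans (two_mul l).ge

end Hamming

namespace SimpleGraph

section Cycles

variable {V : Type*} {G : SimpleGraph V}

theorem IsAcyclic.exists_degree_eq_one [Finite G.edgeSet] [G.LocallyFinite] (h : G.IsAcyclic)
    {u v : V} (huv : G.Adj u v) : ∃ w, G.degree w = 1 := by
  have : Nonempty V := ⟨u⟩
  obtain ⟨a, b, p, hp, hmax⟩ := Walk.exists_isPath_forall_isPath_length_le_length G
  have hlen : 1 ≤ p.length := by
    simpa using hmax u v huv.toWalk (Walk.IsPath.mk' (by simp [huv.ne]))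
  have hnil : ¬p.Nil := by
    rw [← Walk.length_eq_zero_iff]
    omega
  refine ⟨a, degree_eq_one_iff_existsUnique_adj.mpr ⟨p.snd, p.adj_snd hnil, fun w hadj ↦ ?_⟩⟩
  refine h.eq_snd_of_adj_start hp hadj (not_not.mp fun hw ↦ ?_)
  have := hmax w b (p.cons hadj.symm) (hp.cons hw)
  simp at this

theorem exists_isCycle_length_le_card_of_even [Fintype V] [DecidableEq V] {S : Finset (Sym2 V)}
    (hS : ↑S ⊆ G.edgeSet) (hne : S.Nonempty) (heven : ∀ v, Even #{e ∈ S | v ∈ e}) :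
    ∃ (u : V) (c : G.Walk u u), c.IsCycle ∧ c.length ≤ #S := by
  set H := fromEdgeSet (S : Set (Sym2 V))
  have hHS : H.edgeFinset = S := by
    ext e
    simp only [mem_edgeFinset, H, edgeSet_fromEdgeSet, Set.mem_sdiff, Finset.mem_coe]
    exact ⟨And.left, fun he ↦ ⟨he, G.not_isDiag_of_mem_edgeSet (hS he)⟩⟩
  have hdeg : ∀ v, H.degree v ≠ 1 := by
    intro v h1
    rw [← card_incidenceFinset_eq_degree, incidenceFinset_eq_filter, hHS] at h1
    exact Nat.not_even_one (h1 ▸ heven v)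
  obtain ⟨e, he⟩ := hne
  have hHe : e ∈ H.edgeSet := by rw [← mem_edgeFinset, hHS]; exact he
  induction e using Sym2.ind with | _ a b => ?_
  obtain ⟨u, c, hc⟩ : ∃ (u : V) (c : H.Walk u u), c.IsCycle := by
    by_contra! hH
    exact (IsAcyclic.exists_degree_eq_one hH hHe).elim hdeg
  have hHG : H ≤ G := G.fromEdgeSet_le.mpr fun _ h ↦ hS h.1
  exact ⟨u, c.mapLe hHG, hc.mapLe hHG, by
    simpa [Walk.length_mapLe, hHS] using hc.isTrail.length_le_card_edgeFinset⟩

end Cycles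

variable {V : Type*} [Fintype V] {G : SimpleGraph V} [DecidableRel G.Adj]

def edgeSupport (β : G.edgeSet → ZMod 2) : Finset (Sym2 V) :=
  ({e | β e ≠ 0} : Finset G.edgeSet).map (Function.Embedding.subtype _)

theorem card_edgeSupport (β : G.edgeSet → ZMod 2) : #(G.edgeSupport β) = hammingNorm β :=
  card_map _

theorem coe_edgeSupport_subset_edgeSet (β : G.edgeSet → ZMod 2) :
    ↑(G.edgeSupport β) ⊆ G.edgeSet := by
  intro e he
  obtain ⟨e', -, rfl⟩ := mem_map.mp he
  exact e'.2

variable [DecidableEq V]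

theorem edgeSupport_indicator {T : Finset (Sym2 V)} (hT : ↑T ⊆ G.edgeSet) :
    G.edgeSupport (fun e ↦ if (e : Sym2 V) ∈ T then 1 else 0) = T := by
  ext e
  simp only [edgeSupport, mem_map, mem_filter_univ, Function.Embedding.subtype_apply]
  constructor
  · rintro ⟨e', he', rfl⟩
    by_contra h
    exact he' (if_neg h)
  · intro he
    exact ⟨⟨e, hT he⟩, by simp [he], rfl⟩

theorem inc_transpose_mulVec_apply (β : G.edgeSet → ZMod 2) (v : V) :
    ((G.inc)ᵀ *ᵥ β) v = #{e ∈ G.edgeSupport β | v ∈ e} := by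
  rw [edgeSupport, filter_map, card_map, natCast_card_filter, sum_filter]
  refine sum_congr rfl fun e _ ↦ ?_
  simp only [transpose_apply, inc, Function.comp_apply, Function.Embedding.subtype_apply]
  generalize β e = x
  by_cases hv : v ∈ (e : Sym2 V) <;> simp only [hv, if_true, if_false, one_mul, zero_mul, ite_self]
  revert x
  decide

theorem Walk.IsCycle.exists_inc_transpose_mulVec_eq_zero {u : V} {c : G.Walk u u}
    (hc : c.IsCycle) :
    ∃ β : G.edgeSet → ZMod 2, β ≠ 0 ∧ (G.inc)ᵀ *ᵥ β = 0 ∧ hammingNorm β = c.length := by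
  have hnodup := hc.isTrail.edges_nodup
  set T := c.edges.toFinset
  have hsupp : G.edgeSupport (fun e ↦ if (e : Sym2 V) ∈ T then 1 else 0) = T :=
    edgeSupport_indicator fun e he ↦ c.edges_subset_edgeSet (List.mem_toFinset.mp he)
  have hcard : #T = c.length := by
    rw [List.toFinset_card_of_nodup hnodup, Walk.length_edges]
  have hnorm := card_edgeSupport (G := G) (fun e ↦ if (e : Sym2 V) ∈ T then 1 else 0)
  rw [hsupp, hcard] at hnorm
  refine ⟨_, hammingNorm_ne_zero_iff.mp ?_, ?_, hnorm.symm⟩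
  · rw [← hnorm]
    exact (Nat.lt_of_lt_of_le (by norm_num) hc.three_le_length).ne'
  · funext v
    rw [inc_transpose_mulVec_apply, hsupp, Pi.zero_apply, ZMod.natCast_eq_zero_iff_even]
    have hcount : #{e ∈ T | v ∈ e} = c.edges.countP (v ∈ ·) := by
      rw [List.countP_eq_length_filter, ← List.toFinset_card_of_nodup (hnodup.filter _)]
      congr 1
      ext
      simp [T]
    rw [hcount]
    exact (hc.isTrail.even_countP_edges_iff v).mpr fun h ↦ absurd rfl h

theorem exists_isCycle_length_le_hammingNorm {β : G.edgeSet → ZMod 2} (hβ : β ≠ 0)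
    (hker : (G.inc)ᵀ *ᵥ β = 0) :
    ∃ (u : V) (c : G.Walk u u), c.IsCycle ∧ c.length ≤ hammingNorm β := by
  rw [← card_edgeSupport]
  refine exists_isCycle_length_le_card_of_even (coe_edgeSupport_subset_edgeSet β) ?_ fun v ↦ ?_
  · rw [← card_pos, card_edgeSupport, Nat.pos_iff_ne_zero]
    exact hammingNorm_ne_zero_iff.mpr hβ
  · rw [← ZMod.natCast_eq_zero_iff_even, ← inc_transpose_mulVec_apply, hker, Pi.zero_apply]

end SimpleGraph

/-- The degree-parity map is injective on edge subsets of size at most `l` iff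
`G` has no cycle of length at most `2*l` (equivalently, girth at least `2*l+1`). -/
theorem stmt2 {V : Type*} [Fintype V] [DecidableEq V] (G : SimpleGraph V)
    [DecidableRel G.Adj] (l : ℕ) :
    Set.InjOn (fun β : G.edgeSet → ZMod 2 => (G.inc)ᵀ.mulVec β)
      {β | hamWt β ≤ l} ↔
      ¬ ∃ (v : V) (w : G.Walk v v), w.IsCycle ∧ w.length ≤ 2 * l := by
  refine ((G.inc)ᵀ.mulVecLin.toAddMonoidHom.injOn_hammingNorm_le_iff l).trans (not_congr ⟨?_, ?_⟩)
  · rintro ⟨β, hβ, hker, hwt⟩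
    obtain ⟨v, c, hc, hlen⟩ := G.exists_isCycle_length_le_hammingNorm hβ hker
    exact ⟨v, c, hc, hlen.trans hwt⟩
  · rintro ⟨v, c, hc, hlen⟩
    obtain ⟨β, hβ, hker, hwt⟩ := hc.exists_inc_transpose_mulVec_eq_zero
    exact ⟨β, hβ, hker, hwt ▸ hlen⟩
end

section
/- Let G be a connected graph, T a spanning tree of G, and suppose T contains two vertex-disjoint subtrees T_1, T_2, each of depth at most d, such that G contains two distinct edges both having one endpoint in T_1 and the other in T_2. Then G contains a cycle of length at most 4d + 2. -/
open SimpleGraph Walk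

private lemma stmt8_aux {V : Type*} [DecidableEq V] (G T : SimpleGraph V) (hTG : T ≤ G)
    (S : Set V) (r : S) (d : ℕ)
    (hdepth : ∀ v : S, ∃ w : (T.induce S).Walk r v, w.length ≤ d)
    (a b : V) (ha : a ∈ S) (hb : b ∈ S) :
    ∃ p : G.Walk a b, p.IsPath ∧ p.length ≤ 2 * d ∧ ∀ x ∈ p.support, x ∈ S := by
  obtain ⟨wa, hwa⟩ := hdepth ⟨a, ha⟩
  obtain ⟨wb, hwb⟩ := hdepth ⟨b, hb⟩
  let w : (T.induce S).Walk ⟨a, ha⟩ ⟨b, hb⟩ := wa.reverse.append wb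
  have hwlen : w.length ≤ 2 * d := by
    have : w.length = wa.length + wb.length := by simp [w]
    omega
  let f : T.induce S →g G := ⟨Subtype.val, fun h => hTG h⟩
  let p0 := w.map f
  refine ⟨p0.bypass, p0.bypass_isPath,
    (p0.length_bypass_le).trans (by simpa [p0] using hwlen), ?_⟩
  intro x hx
  have := p0.support_bypass_subset hx
  simp only [p0, Walk.support_map, List.mem_map] at this
  obtain ⟨y, _, rfl⟩ := this
  exact y.2

/-- If a spanning tree `T` of a connected graph `G` contains two vertex-disjoint
subtrees `T₁, T₂` (given by vertex sets `S₁, S₂`, each of depth at most `d` from a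
root), and `G` has two distinct edges each joining `S₁` to `S₂`, then `G` contains a
cycle of length at most `4*d + 2`. -/
theorem stmt8 {V : Type*} [Fintype V] [DecidableEq V] (G T : SimpleGraph V)
    (hG : G.Connected) (hTG : T ≤ G) (hT : T.IsTree) (d : ℕ)
    (S1 S2 : Set V) (hdisj : Disjoint S1 S2)
    (r1 : S1) (r2 : S2)
    (hdepth1 : ∀ v : S1, ∃ w : (T.induce S1).Walk r1 v, w.length ≤ d)
    (hdepth2 : ∀ v : S2, ∃ w : (T.induce S2).Walk r2 v, w.length ≤ d)
    (a1 b1 a2 b2 : V)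
    (ha1 : a1 ∈ S1) (hb1 : b1 ∈ S2) (ha2 : a2 ∈ S1) (hb2 : b2 ∈ S2)
    (he1 : G.Adj a1 b1) (he2 : G.Adj a2 b2)
    (hne : s(a1, b1) ≠ s(a2, b2)) :
    ∃ (v : V) (w : G.Walk v v), w.IsCycle ∧ w.length ≤ 4 * d + 2 := by
  obtain ⟨p1, hp1, hp1len, hp1S⟩ := stmt8_aux G T hTG S1 r1 d hdepth1 a1 a2 ha1 ha2
  obtain ⟨p2, hp2, hp2len, hp2S⟩ := stmt8_aux G T hTG S2 r2 d hdepth2 b1 b2 hb1 hb2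
  have hS1 : ∀ x ∈ p1.reverse.support, x ∈ S1 := by
    intro x hx; exact hp1S x (by simpa using hx)
  -- the closed walk
  let c : G.Walk a1 a1 := Walk.cons he1 (p2.append (Walk.cons he2.symm p1.reverse))
  have hedges : c.edges = s(a1, b1) :: (p2.edges ++ (s(b2, a2) :: p1.reverse.edges)) := by
    simp [c]
  have hsupp : c.support.tail = p2.support ++ p1.reverse.support := by
    simp [c, Walk.support_append]
  -- helper facts for disjointness of edge sets
  have h1 : s(a1, b1) ∉ p2.edges := fun h =>
    hdisj.ne_of_mem ha1 (hp2S a1 (p2.fst_mem_support_of_mem_edges h)) rfl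
  have h2 : s(a1, b1) ∉ p1.reverse.edges := fun h =>
    hdisj.ne_of_mem (hS1 b1 (p1.reverse.snd_mem_support_of_mem_edges h)) hb1 rfl
  have h3 : s(a1, b1) ≠ s(b2, a2) := by
    rw [Sym2.eq_swap (a := b2)]; exact hne
  have h4' : s(b2, a2) ∉ p2.edges := fun h =>
    hdisj.ne_of_mem ha2 (hp2S a2 (p2.snd_mem_support_of_mem_edges h)) rfl
  have h5 : s(b2, a2) ∉ p1.reverse.edges := fun h =>
    hdisj.ne_of_mem (hS1 b2 (p1.reverse.fst_mem_support_of_mem_edges h)) hb2 rfl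
  have hdisjE : ∀ e ∈ p2.edges, e ∉ p1.reverse.edges := by
    intro e he he'
    induction e with
    | _ x y =>
      exact hdisj.ne_of_mem (hS1 x (p1.reverse.fst_mem_support_of_mem_edges he'))
        (hp2S x (p2.fst_mem_support_of_mem_edges he)) rfl
  have htrail : c.IsTrail := by
    constructor
    rw [hedges]
    refine List.nodup_cons.mpr ⟨?_, ?_⟩
    · simp only [List.mem_append, List.mem_cons]
      push_neg
      exact ⟨h1, h3, h2⟩
    · refine List.Nodup.append hp2.isTrail.edges_nodup ?_ ?_
      · exact List.nodup_cons.mpr ⟨h5, (hp1.reverse).isTrail.edges_nodup⟩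
      · intro e he he'
        rcases List.mem_cons.mp he' with h | h
        · exact h4' (h ▸ he)
        · exact hdisjE e he h
  have htail : c.support.tail.Nodup := by
    rw [hsupp]
    refine List.Nodup.append hp2.support_nodup (hp1.reverse).support_nodup ?_
    intro x hx hx'
    exact hdisj.ne_of_mem (hS1 x hx') (hp2S x hx) rfl
  refine ⟨a1, c, ⟨⟨htrail, by simp [c]⟩, htail⟩, ?_⟩
  have : c.length = p2.length + (p1.length + 1) + 1 := by
    simp [c]
  omega
end
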